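/- arXiv:2112.11274 — 3 statements merged into one kernel-verified Lean document; each statement's English description precedes it below -/
import Mathlib

section
/- Let ε be a real number with 0 < ε < 0.01. There exist δ > 0 and n₀ (depending only on ε) such that for every n ≥ n₀, every integer r with 1 ≤ r ≤ (1−ε)n, and all permutations σ, τ ∈ S_n with Δ(σ,τ) ≥ 6/ε: |B(σ,r) ∩ B(τ,r)| ≤ 2·exp(−δ·min(Δ(σ,τ), Δ(σ,τ)²/r))·|B(σ,r)|. -/
open Finset

/-- The Hamming distance between two permutations. -/
def permDist {n : ℕ} (σ τ : Equiv.Perm (Fin n)) : ℕ :=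
  (Finset.univ.filter fun i => σ i ≠ τ i).card


lemma desc_add (n a b : ℕ) :
    n.descFactorial (a + b) = n.descFactorial a * (n - a).descFactorial b := by
  induction b with
  | zero => simp
  | succ b ih =>
      rw [← Nat.add_assoc, Nat.descFactorial_succ, ih, Nat.descFactorial_succ,
        Nat.sub_sub]
      ring

lemma desc_mono {m n : ℕ} (h : m ≤ n) (k : ℕ) :
    m.descFactorial k ≤ n.descFactorial k := by
  induction k with
  | zero => simp
  | succ k ih =>
      rw [Nat.descFactorial_succ, Nat.descFactorial_succ]
      exact Nat.mul_le_mul (Nat.sub_le_sub_right h k) ih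

lemma pow_le_desc {x : ℝ} (hx : 0 ≤ x) :
    ∀ (k m : ℕ), x + k ≤ m + 1 → x ^ k ≤ (m.descFactorial k : ℝ) := by
  intro k
  induction k with
  | zero => intro m _; simp
  | succ k ih =>
      intro m h
      push_cast at h
      have hkm : k + 1 ≤ m + 1 := by
        have : (k:ℝ) + 1 ≤ m + 1 := by linarith
        exact_mod_cast this
      have hkm' : k ≤ m := Nat.succ_le_succ_iff.mp hkm
      have h1 : x ^ k ≤ (m.descFactorial k : ℝ) := by
        apply ih; push_cast; linarith
      have h2 : x ≤ ((m - k : ℕ) : ℝ) := by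
        rw [Nat.cast_sub hkm']; push_cast; linarith
      rw [Nat.descFactorial_succ]
      push_cast
      calc x ^ (k+1) = x * x ^ k := by ring
      _ ≤ ((m - k : ℕ) : ℝ) * (m.descFactorial k : ℝ) :=
        mul_le_mul h2 h1 (by positivity) (by positivity)

lemma desc_le_ratio (n : ℕ) (hn : 0 < n) :
    ∀ (u a : ℕ), a ≤ n → (a.descFactorial u : ℝ) ≤ ((a:ℝ)/n)^u * n.descFactorial u := by
  intro u
  induction u with
  | zero => intro a _; simp
  | succ u ih =>
      intro a ha
      rw [Nat.descFactorial_succ, Nat.descFactorial_succ]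
      push_cast
      have h1 := ih a ha
      have key : ((a - u : ℕ) : ℝ) ≤ ((a:ℝ)/n) * ((n - u : ℕ) : ℝ) := by
        rcases le_or_gt u a with hua | hua
        · have hun : u ≤ n := hua.trans ha
          rw [Nat.cast_sub hua, Nat.cast_sub hun]
          have hn' : (0:ℝ) < n := by exact_mod_cast hn
          rw [mul_sub, div_mul_cancel₀]
          · have : (a:ℝ)/n * u ≤ u := by
              apply mul_le_of_le_one_left (by positivity)
              rw [div_le_one hn']; exact_mod_cast ha
            linarith
          · exact ne_of_gt hn'
        · rw [Nat.sub_eq_zero_of_le hua.le]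
          push_cast
          positivity
      calc ((a - u:ℕ):ℝ) * (a.descFactorial u : ℝ)
          ≤ (((a:ℝ)/n) * ((n - u : ℕ):ℝ)) * (((a:ℝ)/n)^u * n.descFactorial u) := by
            apply mul_le_mul key h1 (by positivity)
            positivity
      _ = ((a:ℝ)/n)^(u+1) * (((n-u:ℕ):ℝ) * n.descFactorial u) := by ring

lemma geom_desc (n r k : ℕ) (hrn : r + 2 ≤ n) :
    ∀ J, J + k ≤ r → ∑ j ∈ range (J+1), (n.descFactorial (j+k) : ℝ)
      ≤ 2 * n.descFactorial (J+k) := by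
  intro J
  induction J with
  | zero =>
      intro _
      simp only [Finset.sum_range_one, Nat.zero_add]
      have : (0:ℝ) ≤ (n.descFactorial (0+k) : ℝ) := by positivity
      linarith
  | succ J ih =>
      intro hJ
      rw [Finset.sum_range_succ]
      have hJ' : J + k ≤ r := by omega
      have h1 := ih hJ'
      have hdd : (n.descFactorial (J+1+k) : ℝ) = ((n - (J+k):ℕ):ℝ) * n.descFactorial (J+k) := by
        have : J+1+k = (J+k)+1 := by omega
        rw [this, Nat.descFactorial_succ]
        push_cast; ring
      have h2 : (2:ℝ) ≤ ((n - (J+k):ℕ):ℝ) := by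
        have : 2 ≤ n - (J+k) := by omega
        exact_mod_cast this
      have hpos : (0:ℝ) ≤ (n.descFactorial (J+k) : ℝ) := by positivity
      calc ∑ j ∈ range (J+1), (n.descFactorial (j+k) : ℝ) + (n.descFactorial (J+1+k) : ℝ)
          ≤ 2 * n.descFactorial (J+k) + ((n - (J+k):ℕ):ℝ) * n.descFactorial (J+k) := by
            rw [hdd]; linarith
      _ ≤ 2 * (((n - (J+k):ℕ):ℝ) * n.descFactorial (J+k)) := by nlinarith
      _ = 2 * n.descFactorial (J+1+k) := by rw [hdd]

lemma numD_lb : ∀ m, 2 ≤ m → m.factorial ≤ 3 * numDerangements m := by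
  have key : ∀ k, (k+2).factorial ≤ 3 * numDerangements (k+2) ∧
      (k+3).factorial ≤ 3 * numDerangements (k+3) := by
    intro k
    induction k with
    | zero =>
        constructor
        · show Nat.factorial 2 ≤ 3 * numDerangements 2
          rw [show (2:ℕ) = 0 + 2 by rfl, numDerangements_add_two]
          simp [Nat.factorial]
        · show Nat.factorial 3 ≤ 3 * numDerangements 3
          rw [show (3:ℕ) = 1 + 2 by rfl, numDerangements_add_two]
          rw [show (1+1:ℕ) = 0 + 2 by rfl, numDerangements_add_two]
          simp [Nat.factorial]
    | succ k ih =>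
        refine ⟨ih.2, ?_⟩
        have hrec : numDerangements (k+4) = (k+3) * (numDerangements (k+2) + numDerangements (k+3)) := by
          have := numDerangements_add_two (k+2)
          convert this using 2 <;> omega
        show (k+4).factorial ≤ 3 * numDerangements (k+4)
        rw [hrec]
        have h1 := ih.1
        have h2 := ih.2
        have hfac : (k+4).factorial = (k+4) * ((k+3) * (k+2).factorial) := by
          rw [Nat.factorial_succ, Nat.factorial_succ]
        have hfac3 : (k+3).factorial = (k+3) * (k+2).factorial := Nat.factorial_succ _
        nlinarith [Nat.factorial_pos (k+2)]
  intro m hm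
  obtain ⟨k, rfl⟩ : ∃ k, m = k + 2 := ⟨m - 2, by omega⟩
  exact (key k).1

lemma sumJ (n r d s t : ℕ) (ε : ℝ) (hst : s + t ≤ d) (hdn : d ≤ n)
    (hε : 0 < ε) (hεn2 : 2 ≤ ε * n) (hrn : (r:ℝ) ≤ (1-ε) * n) :
    ∑ j ∈ range (n - d + 1), ((n-d).choose j : ℝ) *
      (if j + d ≤ r + s ∧ j + d ≤ r + t then ((d - (s+t) + j).factorial : ℝ) else 0)
    ≤ 2 * ((r:ℝ)/n) ^ (d - (s+t)) * ((Real.sqrt (ε * n))⁻¹) ^ (s+t) *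
        (n.descFactorial r : ℝ) := by
  have hn0 : 0 < n := by
    by_contra h
    push_neg at h
    interval_cases n <;> simp_all <;> linarith
  have hn0' : (0:ℝ) < n := by exact_mod_cast hn0
  have hrn2 : (r:ℝ) + 2 ≤ n := by nlinarith
  have hrnn : r + 2 ≤ n := by exact_mod_cast hrn2
  have hεnr : ε * n ≤ (n:ℝ) - r + 1 := by nlinarith
  have hy1 : 1 ≤ Real.sqrt (ε * n) := by
    rw [show (1:ℝ) = Real.sqrt 1 by simp]
    exact Real.sqrt_le_sqrt (by linarith)
  have hy0 : 0 < (Real.sqrt (ε * n))⁻¹ := by positivity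
  set u := d - (s+t) with hu
  set m := min s t with hm
  set M := max s t with hM
  have hms : m ≤ s := min_le_left _ _
  have hmt : m ≤ t := min_le_right _ _
  have hMst : s ≤ M ∧ t ≤ M ∧ m + M = s + t := ⟨le_max_left _ _, le_max_right _ _, min_add_max s t⟩
  rcases le_or_gt d (r + m) with hcase | hcase
  swap
  · -- no valid j
    have : ∀ j ∈ range (n - d + 1), ((n-d).choose j : ℝ) *
        (if j + d ≤ r + s ∧ j + d ≤ r + t then ((u + j).factorial : ℝ) else 0) = 0 := by
      intro j _
      have : ¬ (j + d ≤ r + s ∧ j + d ≤ r + t) := by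
        rintro ⟨h1, h2⟩
        omega
      rw [if_neg this, mul_zero]
    rw [Finset.sum_eq_zero this]
    positivity
  · set J := r + m - d with hJ
    -- Step A : truncate the sum
    have stepA : ∑ j ∈ range (n - d + 1), ((n-d).choose j : ℝ) *
        (if j + d ≤ r + s ∧ j + d ≤ r + t then ((u + j).factorial : ℝ) else 0)
        ≤ ∑ j ∈ range (J + 1), ((n-d).choose j : ℝ) * ((u + j).factorial : ℝ) := by
      have pt : ∀ j ∈ range (n - d + 1), ((n-d).choose j : ℝ) *
          (if j + d ≤ r + s ∧ j + d ≤ r + t then ((u + j).factorial : ℝ) else 0)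
          ≤ (if j ∈ range (J+1) then ((n-d).choose j : ℝ) * ((u + j).factorial : ℝ) else 0) := by
        intro j _
        by_cases hc : j + d ≤ r + s ∧ j + d ≤ r + t
        · rw [if_pos hc, if_pos]
          rw [Finset.mem_range]
          omega
        · rw [if_neg hc, mul_zero]
          by_cases h2 : j ∈ range (J+1)
          · rw [if_pos h2]; positivity
          · rw [if_neg h2]
      calc _ ≤ ∑ j ∈ range (n - d + 1),
            (if j ∈ range (J+1) then ((n-d).choose j : ℝ) * ((u + j).factorial : ℝ) else 0) :=
          Finset.sum_le_sum pt
      _ = ∑ j ∈ range (n - d + 1) ∩ range (J+1), ((n-d).choose j : ℝ) * ((u + j).factorial : ℝ) :=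
          Finset.sum_ite_mem _ _ _
      _ ≤ _ := by
          apply Finset.sum_le_sum_of_subset_of_nonneg (Finset.inter_subset_right)
          intro i _ _
          positivity
    -- Step B : pointwise bound
    have stepB : ∀ j ∈ range (J+1), ((n-d).choose j : ℝ) * ((u + j).factorial : ℝ)
        ≤ ((r:ℝ)/n)^u / (ε*n)^t * (n.descFactorial (j + (u + t)) : ℝ) := by
      intro j hj
      rw [Finset.mem_range] at hj
      have hjJ : j ≤ J := by omega
      have hujt : u + j + t ≤ r := by omega
      have huj : u + j ≤ r := by omega
      have hujn : u + j ≤ n := le_trans huj (by omega)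
      have natid : (n-d).choose j * (u + j).factorial
          = (n-d).descFactorial j * (u+j).descFactorial u := by
        have e1 : (n-d).descFactorial j = j.factorial * (n-d).choose j :=
          Nat.descFactorial_eq_factorial_mul_choose _ _
        have e2 : (u+j).descFactorial u = u.factorial * (u+j).choose u :=
          Nat.descFactorial_eq_factorial_mul_choose _ _
        have e3 : (u+j).choose u * u.factorial * j.factorial = (u+j).factorial := by
          have := Nat.choose_mul_factorial_mul_factorial (show u ≤ u + j by omega)
          rwa [show u + j - u = j by omega] at this
        rw [e1, e2, ← e3]
        ring
      have c1 : ((n-d).descFactorial j : ℝ) ≤ ((n-u).descFactorial j : ℝ) := by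
        exact_mod_cast desc_mono (by omega) j
      have c2 : ((u+j).descFactorial u : ℝ) ≤ ((r:ℝ)/n)^u * (n.descFactorial u : ℝ) := by
        calc ((u+j).descFactorial u : ℝ) ≤ (((u+j):ℝ)/n)^u * (n.descFactorial u : ℝ) := by
              have := desc_le_ratio n hn0 u (u+j) hujn
              push_cast at this ⊢
              exact this
        _ ≤ ((r:ℝ)/n)^u * (n.descFactorial u : ℝ) := by
              gcongr
              exact_mod_cast huj
      have c3 : (ε*n)^t ≤ ((n - (u+j)).descFactorial t : ℝ) := by
        apply pow_le_desc (by positivity)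
        have hcast : ((n - (u+j) : ℕ) : ℝ) = (n:ℝ) - (u+j) := by
          rw [Nat.cast_sub hujn]; push_cast; ring
        rw [hcast]
        have hc : ((u:ℝ) + j) + t ≤ r := by exact_mod_cast hujt
        push_cast at hc
        push_cast
        linarith
      have c4 : (n.descFactorial (j + (u + t)) : ℝ)
          = (n.descFactorial u : ℝ) * ((n-u).descFactorial j : ℝ) * ((n - (u+j)).descFactorial t : ℝ) := by
        have e : j + (u + t) = (u + j) + t := by omega
        rw [e, desc_add n (u+j) t, desc_add n u j]
        push_cast
        ring
      have hpow : (0:ℝ) < (ε*n)^t := by positivity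
      rw [div_mul_eq_mul_div, le_div_iff₀ hpow]
      have lhs_id : (((n-d).choose j : ℝ) * ((u + j).factorial : ℝ))
          = ((n-d).descFactorial j : ℝ) * ((u+j).descFactorial u : ℝ) := by
        exact_mod_cast congrArg (Nat.cast (R := ℝ)) natid
      rw [lhs_id]
      calc ((n-d).descFactorial j : ℝ) * ((u+j).descFactorial u : ℝ) * (ε*n)^t
          ≤ ((n-u).descFactorial j : ℝ) * (((r:ℝ)/n)^u * (n.descFactorial u : ℝ)) * ((n - (u+j)).descFactorial t : ℝ) := by
            apply mul_le_mul
            · exact mul_le_mul c1 c2 (by positivity) (by positivity)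
            · exact c3
            · positivity
            · positivity
      _ = ((r:ℝ)/n)^u * (n.descFactorial (j + (u+t)) : ℝ) := by
            rw [c4]; ring
    -- Step C : geometric sum
    have hJutr : J + (u + t) ≤ r := by omega
    have stepC : ∑ j ∈ range (J+1), ((n-d).choose j : ℝ) * ((u + j).factorial : ℝ)
        ≤ ((r:ℝ)/n)^u / (ε*n)^t * (2 * (n.descFactorial (J + (u+t)) : ℝ)) := by
      calc ∑ j ∈ range (J+1), ((n-d).choose j : ℝ) * ((u + j).factorial : ℝ)
          ≤ ∑ j ∈ range (J+1), ((r:ℝ)/n)^u / (ε*n)^t * (n.descFactorial (j + (u + t)) : ℝ) :=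
            Finset.sum_le_sum stepB
      _ = ((r:ℝ)/n)^u / (ε*n)^t * ∑ j ∈ range (J+1), (n.descFactorial (j + (u + t)) : ℝ) := by
            rw [Finset.mul_sum]
      _ ≤ _ := by
            apply mul_le_mul_of_nonneg_left _ (by positivity)
            exact geom_desc n r (u+t) hrnn J hJutr
    -- Step D : compare with descFactorial r
    set a := s - m with ha
    have hra : J + (u + t) + a = r := by omega
    have stepD : (n.descFactorial (J + (u+t)) : ℝ) * (ε*n)^a ≤ (n.descFactorial r : ℝ) := by
      have e : n.descFactorial r = n.descFactorial (J + (u+t)) * (n - (J + (u+t))).descFactorial a := by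
        rw [← hra, desc_add]
      rw [e]
      push_cast
      apply mul_le_mul_of_nonneg_left _ (by positivity)
      apply pow_le_desc (by positivity)
      have hJn : J + (u+t) ≤ n := by omega
      have hcast : ((n - (J + (u+t)) : ℕ) : ℝ) = (n:ℝ) - (J + (u+t)) := by
        rw [Nat.cast_sub hJn]; push_cast; ring
      rw [hcast]
      have hc : ((J:ℝ) + ((u:ℝ)+t)) + a = r := by exact_mod_cast hra
      push_cast at hc ⊢
      linarith
    -- Step E : assemble
    have hta : t + a = M := by omega
    have hinv : ((ε*n)^t)⁻¹ * ((ε*n)^a)⁻¹ ≤ ((Real.sqrt (ε*n))⁻¹) ^ (s+t) := by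
      have h1 : (Real.sqrt (ε*n))^(s+t) ≤ (ε*n)^M := by
        have e2 : (ε*n)^M = (Real.sqrt (ε*n))^(2*M) := by
          rw [pow_mul, Real.sq_sqrt (by linarith)]
        rw [e2]
        apply pow_le_pow_right₀ hy1
        omega
      have e3 : ((ε*n)^t)⁻¹ * ((ε*n)^a)⁻¹ = ((ε*n)^M)⁻¹ := by
        rw [← hta, pow_add, mul_inv]
      rw [e3, inv_pow]
      apply inv_anti₀ (by positivity) h1
    -- final chain
    have hdescJ : (0:ℝ) ≤ (n.descFactorial (J + (u+t)) : ℝ) := by positivity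
    have hεa : (0:ℝ) < (ε*n)^a := by positivity
    have hεt : (0:ℝ) < (ε*n)^t := by positivity
    have hstep : (n.descFactorial (J + (u+t)) : ℝ) ≤ (n.descFactorial r : ℝ) / (ε*n)^a := by
      rw [le_div_iff₀ hεa]; exact stepD
    calc ∑ j ∈ range (n - d + 1), ((n-d).choose j : ℝ) *
        (if j + d ≤ r + s ∧ j + d ≤ r + t then ((u + j).factorial : ℝ) else 0)
        ≤ ∑ j ∈ range (J+1), ((n-d).choose j : ℝ) * ((u + j).factorial : ℝ) := stepA
    _ ≤ ((r:ℝ)/n)^u / (ε*n)^t * (2 * (n.descFactorial (J + (u+t)) : ℝ)) := stepC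
    _ ≤ ((r:ℝ)/n)^u / (ε*n)^t * (2 * ((n.descFactorial r : ℝ) / (ε*n)^a)) := by
        apply mul_le_mul_of_nonneg_left _ (by positivity)
        linarith
    _ = 2 * ((r:ℝ)/n)^u * (((ε*n)^t)⁻¹ * ((ε*n)^a)⁻¹) * (n.descFactorial r : ℝ) := by
        field_simp
    _ ≤ 2 * ((r:ℝ)/n)^u * ((Real.sqrt (ε * n))⁻¹) ^ (s+t) * (n.descFactorial r : ℝ) := by
        apply mul_le_mul_of_nonneg_right _ (by positivity)
        apply mul_le_mul_of_nonneg_left hinv (by positivity)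

-- fiber bound: permutations agreeing with π₀ outside W
lemma fiber_bound {n : ℕ} (W : Finset (Fin n)) (π₀ : Equiv.Perm (Fin n)) :
    (univ.filter fun π : Equiv.Perm (Fin n) => ∀ i ∉ W, π i = π₀ i).card
      ≤ W.card.factorial := by
  classical
  set S := univ.filter (fun π : Equiv.Perm (Fin n) => ∀ i ∉ W, π i = π₀ i) with hS
  set C : Finset (Fin n) := (Wᶜ.image π₀)ᶜ with hC
  have hCcard : C.card = W.card := by
    rw [hC, card_compl, Finset.card_image_of_injective _ π₀.injective, card_compl]
    have := Finset.card_le_univ W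
    omega
  have key : ∀ π ∈ S, ∀ i : Fin n, i ∈ W → π i ∈ C := by
    intro π hπ i hi
    rw [hS, Finset.mem_filter] at hπ
    rw [hC, Finset.mem_compl]
    intro hmem
    rw [Finset.mem_image] at hmem
    obtain ⟨j, hj, hji⟩ := hmem
    rw [Finset.mem_compl] at hj
    have h1 : π j = π₀ j := hπ.2 j hj
    have h2 : π i = π j := by rw [h1, hji]
    have h3 : i = j := π.injective h2
    exact hj (h3 ▸ hi)
  have hle : S.card ≤ Fintype.card ((W : Finset (Fin n)) ↪ (C : Finset (Fin n))) := by
    rw [← Fintype.card_coe]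
    apply Fintype.card_le_of_injective
      (fun π => ⟨fun i => ⟨π.1 i.1, key π.1 π.2 i.1 i.2⟩,
        fun i i' h => by
          apply Subtype.ext
          exact π.1.injective (congrArg Subtype.val h)⟩)
    intro π π' heq
    apply Subtype.ext
    apply Equiv.ext
    intro i
    by_cases hi : i ∈ W
    · have h0 := DFunLike.congr_fun heq (⟨i, hi⟩ : {x // x ∈ W})
      exact congrArg Subtype.val h0
    · have h1 : π.1 i = π₀ i := (Finset.mem_filter.mp π.2).2 i hi
      have h2 : π'.1 i = π₀ i := (Finset.mem_filter.mp π'.2).2 i hi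
      rw [h1, h2]
  calc S.card ≤ _ := hle
  _ = C.card.descFactorial W.card := by
      rw [Fintype.card_embedding_eq, Fintype.card_coe, Fintype.card_coe]
  _ = W.card.factorial := by rw [hCcard, Nat.descFactorial_self]

lemma ball_lb {n : ℕ} (σ : Equiv.Perm (Fin n)) (r : ℕ) (hnd : numDerangements r * 3 ≥ r.factorial) :
    n.descFactorial r ≤ 3 * (univ.filter fun π : Equiv.Perm (Fin n) => permDist π σ ≤ r).card := by
  classical
  set Ball := univ.filter fun π : Equiv.Perm (Fin n) => permDist π σ ≤ r with hBall
  set F : Finset (Fin n) → Finset (Equiv.Perm (Fin n)) :=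
    fun R => univ.filter (fun π => univ.filter (fun i => π i ≠ σ i) = R) with hF
  have step1 : ∀ R ∈ powersetCard r (univ : Finset (Fin n)), numDerangements r ≤ (F R).card := by
    intro R hR
    obtain ⟨-, hRcard⟩ := Finset.mem_powersetCard.mp hR
    have hcard : numDerangements r = Fintype.card (derangements {x // x ∈ R}) := by
      rw [card_derangements_eq_numDerangements, Fintype.card_coe, hRcard]
    rw [hcard, ← Fintype.card_coe]
    apply Fintype.card_le_of_injective (fun f =>
      (⟨σ * Equiv.Perm.ofSubtype f.1, by
        rw [hF, Finset.mem_filter]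
        refine ⟨Finset.mem_univ _, ?_⟩
        ext i
        simp only [Finset.mem_filter, Finset.mem_univ, true_and]
        rw [Equiv.Perm.mul_apply, σ.injective.ne_iff' rfl]
        constructor
        · intro hne
          by_contra hiR
          exact hne (Equiv.Perm.ofSubtype_apply_of_not_mem f.1 hiR)
        · intro hiR
          rw [Equiv.Perm.ofSubtype_apply_of_mem f.1 hiR]
          intro hcontra
          exact f.2 ⟨i, hiR⟩ (Subtype.ext hcontra)⟩ : {x // x ∈ F R}))
    intro f g heq
    have h1 : Equiv.Perm.ofSubtype f.1 = Equiv.Perm.ofSubtype g.1 := by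
      have := congrArg Subtype.val heq
      exact mul_left_cancel this
    apply Subtype.ext
    apply Equiv.ext
    intro x
    apply Subtype.ext
    have h2 := congrArg (fun e => (e : Equiv.Perm (Fin n)) x.1) h1
    simpa [Equiv.Perm.ofSubtype_apply_of_mem f.1 x.2,
      Equiv.Perm.ofSubtype_apply_of_mem g.1 x.2] using h2
  have step2 : (powersetCard r (univ : Finset (Fin n))).biUnion F ⊆ Ball := by
    intro π hπ
    rw [Finset.mem_biUnion] at hπ
    obtain ⟨R, hR, hπR⟩ := hπ
    obtain ⟨-, hRcard⟩ := Finset.mem_powersetCard.mp hR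
    rw [hF, Finset.mem_filter] at hπR
    rw [hBall, Finset.mem_filter]
    refine ⟨Finset.mem_univ _, ?_⟩
    show (Finset.univ.filter fun i => π i ≠ σ i).card ≤ r
    rw [hπR.2, hRcard]
  have step3 : ∑ R ∈ powersetCard r (univ : Finset (Fin n)), (F R).card
      = ((powersetCard r (univ : Finset (Fin n))).biUnion F).card := by
    symm
    apply Finset.card_biUnion
    intro R hR R' hR' hne
    rw [Function.onFun, Finset.disjoint_left]
    intro π hπ hπ'
    rw [hF, Finset.mem_filter] at hπ hπ'
    exact hne (hπ.2 ▸ hπ'.2)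
  have main : n.choose r * numDerangements r ≤ Ball.card := by
    calc n.choose r * numDerangements r
        = ∑ R ∈ powersetCard r (univ : Finset (Fin n)), numDerangements r := by
          rw [Finset.sum_const, Finset.card_powersetCard, Finset.card_univ,
            Fintype.card_fin, smul_eq_mul]
    _ ≤ ∑ R ∈ powersetCard r (univ : Finset (Fin n)), (F R).card := Finset.sum_le_sum step1
    _ = _ := step3
    _ ≤ Ball.card := Finset.card_le_card step2
  calc n.descFactorial r = r.factorial * n.choose r := Nat.descFactorial_eq_factorial_mul_choose n r
  _ ≤ (numDerangements r * 3) * n.choose r := Nat.mul_le_mul_right _ hnd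
  _ = 3 * (n.choose r * numDerangements r) := by ring
  _ ≤ 3 * Ball.card := Nat.mul_le_mul_left _ main

lemma card_filter_split {α : Type*} [Fintype α] [DecidableEq α]
    (P : α → Prop) [DecidablePred P] (B : Finset α) :
    (univ.filter P).card = (B.filter P).card + (Bᶜ.filter P).card := by
  rw [← Finset.card_union_of_disjoint
    (Finset.disjoint_filter_filter disjoint_compl_right), ← Finset.filter_union,
    Finset.union_compl]

lemma sum_powerset_card {α : Type*} [DecidableEq α] (s : Finset α) (f : ℕ → ℝ) :
    ∑ t ∈ s.powerset, f t.card = ∑ j ∈ range (s.card + 1), (s.card.choose j : ℝ) * f j := by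
  rw [Finset.sum_powerset]
  apply Finset.sum_congr rfl
  intro j hj
  rw [Finset.sum_congr rfl (fun t ht => by rw [(Finset.mem_powersetCard.mp ht).2]),
      Finset.sum_const, Finset.card_powersetCard, nsmul_eq_mul]

set_option maxHeartbeats 2000000 in
lemma inter_le_sum (n r : ℕ) (σ τ : Equiv.Perm (Fin n)) (ε : ℝ) (hε : 0 < ε)
    (hεn2 : 2 ≤ ε * n) (hrn : (r:ℝ) ≤ (1-ε) * n) :
    ((univ.filter fun π : Equiv.Perm (Fin n) =>
        permDist π σ ≤ r ∧ permDist π τ ≤ r).card : ℝ)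
      ≤ 2 * ((r:ℝ)/n + 2 * (Real.sqrt (ε*n))⁻¹) ^ (permDist σ τ) *
          (n.descFactorial r : ℝ) := by
  classical
  set A : Finset (Fin n) := univ.filter (fun i => σ i ≠ τ i) with hA
  set d : ℕ := A.card with hd
  have hpd : permDist σ τ = d := rfl
  have hdn : d ≤ n := by
    calc d ≤ (univ : Finset (Fin n)).card := Finset.card_le_card (Finset.filter_subset _ _)
    _ = n := by rw [Finset.card_univ, Fintype.card_fin]
  set I := univ.filter (fun π : Equiv.Perm (Fin n) =>
      permDist π σ ≤ r ∧ permDist π τ ≤ r) with hI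
  set V := A.powerset ×ˢ A.powerset ×ˢ Aᶜ.powerset with hV
  set φ : Equiv.Perm (Fin n) → Finset (Fin n) × Finset (Fin n) × Finset (Fin n) :=
    fun π => (A.filter (fun i => π i = σ i), A.filter (fun i => π i = τ i),
      Aᶜ.filter (fun i => π i ≠ σ i)) with hφ
  set P : Finset (Fin n) × Finset (Fin n) × Finset (Fin n) → Prop :=
    fun v => v.2.1 ⊆ A \ v.1 ∧ v.2.2.card + d ≤ r + v.1.card ∧
      v.2.2.card + d ≤ r + v.2.1.card with hP
  -- facts about members of fibers
  have hfact : ∀ π ∈ I, ∀ v, φ π = v → v ∈ V ∧ P v := by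
    intro π hπ v hv
    rw [hI, Finset.mem_filter] at hπ
    obtain ⟨-, hπσ, hπτ⟩ := hπ
    subst hv
    have hTA : A.filter (fun i => π i = τ i) ⊆ A \ A.filter (fun i => π i = σ i) := by
      intro i hi
      have hiA : i ∈ A := (Finset.mem_filter.mp hi).1
      have hiτ : π i = τ i := (Finset.mem_filter.mp hi).2
      have hiστ : σ i ≠ τ i := (Finset.mem_filter.mp hiA).2
      apply Finset.mem_sdiff.mpr
      refine ⟨hiA, fun hmem => ?_⟩
      have hiσ : π i = σ i := (Finset.mem_filter.mp hmem).2
      exact hiστ (by rw [← hiσ, hiτ])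
    have hdσ : permDist π σ
        = (A.filter (fun i => π i ≠ σ i)).card + (Aᶜ.filter (fun i => π i ≠ σ i)).card :=
      card_filter_split _ A
    have hsplitσ : (A.filter (fun i => π i = σ i)).card
        + (A.filter (fun i => π i ≠ σ i)).card = d := by
      rw [hd]
      exact Finset.card_filter_add_card_filter_not _
    have hdτ : permDist π τ
        = (A.filter (fun i => π i ≠ τ i)).card + (Aᶜ.filter (fun i => π i ≠ τ i)).card :=
      card_filter_split _ A
    have hsplitτ : (A.filter (fun i => π i = τ i)).card
        + (A.filter (fun i => π i ≠ τ i)).card = d := by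
      rw [hd]
      exact Finset.card_filter_add_card_filter_not _
    have hJτ : Aᶜ.filter (fun i => π i ≠ τ i) = Aᶜ.filter (fun i => π i ≠ σ i) := by
      apply Finset.filter_congr
      intro i hi
      rw [Finset.mem_compl, hA, Finset.mem_filter] at hi
      have : σ i = τ i := by
        by_contra hne
        exact hi ⟨Finset.mem_univ _, hne⟩
      rw [this]
    constructor
    · rw [hV, Finset.mem_product, Finset.mem_product]
      exact ⟨Finset.mem_powerset.mpr (Finset.filter_subset _ _),
        Finset.mem_powerset.mpr (Finset.filter_subset _ _),
        Finset.mem_powerset.mpr (Finset.filter_subset _ _)⟩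
    · refine ⟨hTA, ?_, ?_⟩
      · simp only [hφ]
        rw [hdσ] at hπσ
        omega
      · simp only [hφ]
        rw [hdτ, hJτ] at hπτ
        omega
  -- counting step
  have hcount : I.card ≤ ∑ v ∈ V,
      (if P v then (d - (v.1.card + v.2.1.card) + v.2.2.card).factorial else 0) := by
    rw [Finset.card_eq_sum_card_fiberwise (f := φ) (t := V)
      (fun π hπ => (hfact π hπ _ rfl).1)]
    apply Finset.sum_le_sum
    intro v hv
    rcases Finset.eq_empty_or_nonempty (I.filter (fun π => φ π = v)) with hemp | ⟨π₀, hπ₀⟩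
    · rw [hemp, Finset.card_empty]
      exact Nat.zero_le _
    · have hπ₀I : π₀ ∈ I := (Finset.mem_filter.mp hπ₀).1
      have hφ₀ : φ π₀ = v := (Finset.mem_filter.mp hπ₀).2
      have hPv := (hfact π₀ hπ₀I v hφ₀).2
      rw [if_pos hPv]
      have hS : v.1 = A.filter (fun i => π₀ i = σ i) := by rw [← hφ₀]
      have hT : v.2.1 = A.filter (fun i => π₀ i = τ i) := by rw [← hφ₀]
      have hJ : v.2.2 = Aᶜ.filter (fun i => π₀ i ≠ σ i) := by rw [← hφ₀]
      set W := (A \ (v.1 ∪ v.2.1)) ∪ v.2.2 with hW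
      have key : ∀ π' : Equiv.Perm (Fin n), φ π' = v → ∀ i : Fin n,
          (i ∈ v.1 → π' i = σ i) ∧ (i ∈ v.2.1 → π' i = τ i) ∧
          (i ∉ A → i ∉ v.2.2 → π' i = σ i) := by
        intro π' hπ' i
        refine ⟨fun h1 => ?_, fun h2 => ?_, fun h3 h4 => ?_⟩
        · rw [← hπ'] at h1
          exact (Finset.mem_filter.mp h1).2
        · rw [← hπ'] at h2
          exact (Finset.mem_filter.mp h2).2
        · rw [← hπ'] at h4
          by_contra hne
          exact h4 (Finset.mem_filter.mpr ⟨Finset.mem_compl.mpr h3, hne⟩)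
      have hsub : I.filter (fun π => φ π = v)
          ⊆ univ.filter (fun π => ∀ i ∉ W, π i = π₀ i) := by
        intro π hπ
        have hφπ : φ π = v := (Finset.mem_filter.mp hπ).2
        refine Finset.mem_filter.mpr ⟨Finset.mem_univ _, fun i hi => ?_⟩
        rw [hW, Finset.mem_union, not_or] at hi
        obtain ⟨hi1, hi2⟩ := hi
        by_cases hiA : i ∈ A
        · have hiST : i ∈ v.1 ∪ v.2.1 := by
            by_contra hcon
            exact hi1 (Finset.mem_sdiff.mpr ⟨hiA, hcon⟩)
          rcases Finset.mem_union.mp hiST with h | h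
          · rw [(key π hφπ i).1 h, (key π₀ hφ₀ i).1 h]
          · rw [(key π hφπ i).2.1 h, (key π₀ hφ₀ i).2.1 h]
        · rw [(key π hφπ i).2.2 hiA hi2, (key π₀ hφ₀ i).2.2 hiA hi2]
      have hWcard : W.card = d - (v.1.card + v.2.1.card) + v.2.2.card := by
        have hdisj1 : Disjoint (A \ (v.1 ∪ v.2.1)) v.2.2 := by
          rw [Finset.disjoint_left]
          intro i hiA hiJ
          rw [hJ] at hiJ
          exact (Finset.mem_compl.mp (Finset.mem_filter.mp hiJ).1)
            (Finset.mem_sdiff.mp hiA).1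
        have hdisj2 : Disjoint v.1 v.2.1 := by
          rw [Finset.disjoint_left]
          intro i hiS hiT
          have := hPv.1 hiT
          exact (Finset.mem_sdiff.mp this).2 hiS
        have hsubA : v.1 ∪ v.2.1 ⊆ A := by
          apply Finset.union_subset
          · rw [hS]; exact Finset.filter_subset _ _
          · rw [hT]; exact Finset.filter_subset _ _
        rw [hW, Finset.card_union_of_disjoint hdisj1, Finset.card_sdiff_of_subset hsubA,
          Finset.card_union_of_disjoint hdisj2, ← hd]
      calc (I.filter (fun π => φ π = v)).card
          ≤ (univ.filter (fun π => ∀ i ∉ W, π i = π₀ i)).card := Finset.card_le_card hsub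
      _ ≤ W.card.factorial := fiber_bound W π₀
      _ = (d - (v.1.card + v.2.1.card) + v.2.2.card).factorial := by rw [hWcard]
  -- real-valued summation
  set x : ℝ := (r:ℝ)/n with hx
  set y : ℝ := (Real.sqrt (ε*n))⁻¹ with hy
  set Dr : ℝ := (n.descFactorial r : ℝ) with hDr
  have hx0 : 0 ≤ x := by positivity
  have hy0 : 0 ≤ y := by positivity
  have hDr0 : 0 ≤ Dr := by positivity
  have hcast : (I.card : ℝ) ≤ ∑ v ∈ V,
      (if P v then ((d - (v.1.card + v.2.1.card) + v.2.2.card).factorial : ℝ) else 0) := by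
    calc (I.card : ℝ) ≤ ((∑ v ∈ V,
        (if P v then (d - (v.1.card + v.2.1.card) + v.2.2.card).factorial else 0) : ℕ) : ℝ) := by
          exact_mod_cast hcount
    _ = _ := by
        rw [Nat.cast_sum]
        apply Finset.sum_congr rfl
        intro v hv
        by_cases hp : P v
        · rw [if_pos hp, if_pos hp]
        · rw [if_neg hp, if_neg hp, Nat.cast_zero]
  have hsplit : ∑ v ∈ V,
      (if P v then ((d - (v.1.card + v.2.1.card) + v.2.2.card).factorial : ℝ) else 0)
      = ∑ S ∈ A.powerset, ∑ T ∈ A.powerset, ∑ J ∈ Aᶜ.powerset,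
        (if (T ⊆ A \ S ∧ J.card + d ≤ r + S.card ∧ J.card + d ≤ r + T.card)
          then ((d - (S.card + T.card) + J.card).factorial : ℝ) else 0) := by
    rw [hV, Finset.sum_product]
    apply Finset.sum_congr rfl
    intro S hS
    rw [Finset.sum_product]
  rw [hsplit] at hcast
  -- bound the J-sum
  have hJb : ∀ S ∈ A.powerset, ∀ T ∈ A.powerset,
      ∑ J ∈ Aᶜ.powerset,
        (if (T ⊆ A \ S ∧ J.card + d ≤ r + S.card ∧ J.card + d ≤ r + T.card)
          then ((d - (S.card + T.card) + J.card).factorial : ℝ) else 0)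
      ≤ (if T ⊆ A \ S then
          2 * x ^ (d - (S.card + T.card)) * y ^ (S.card + T.card) * Dr else 0) := by
    intro S hS T hT
    by_cases hTs : T ⊆ A \ S
    · rw [if_pos hTs]
      have hSA : S ⊆ A := Finset.mem_powerset.mp hS
      have hstd : S.card + T.card ≤ d := by
        have h1 : Disjoint S T := by
          rw [Finset.disjoint_left]
          intro i hiS hiT
          exact (Finset.mem_sdiff.mp (hTs hiT)).2 hiS
        have h2 : S ∪ T ⊆ A :=
          Finset.union_subset hSA (fun i hi => (Finset.mem_sdiff.mp (hTs hi)).1)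
        calc S.card + T.card = (S ∪ T).card := (Finset.card_union_of_disjoint h1).symm
        _ ≤ d := Finset.card_le_card h2
      have hAc : Aᶜ.card = n - d := by
        rw [Finset.card_compl, Fintype.card_fin, ← hd]
      calc ∑ J ∈ Aᶜ.powerset,
          (if (T ⊆ A \ S ∧ J.card + d ≤ r + S.card ∧ J.card + d ≤ r + T.card)
            then ((d - (S.card + T.card) + J.card).factorial : ℝ) else 0)
          = ∑ J ∈ Aᶜ.powerset,
            (fun j => (if (j + d ≤ r + S.card ∧ j + d ≤ r + T.card)
              then ((d - (S.card + T.card) + j).factorial : ℝ) else 0)) J.card := by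
            apply Finset.sum_congr rfl
            intro J hJ
            simp only [hTs, true_and]
      _ = ∑ j ∈ range (n - d + 1), ((n-d).choose j : ℝ) *
            (if (j + d ≤ r + S.card ∧ j + d ≤ r + T.card)
              then ((d - (S.card + T.card) + j).factorial : ℝ) else 0) := by
            rw [sum_powerset_card Aᶜ (fun j => (if (j + d ≤ r + S.card ∧ j + d ≤ r + T.card)
              then ((d - (S.card + T.card) + j).factorial : ℝ) else 0)), hAc]
      _ ≤ 2 * x ^ (d - (S.card + T.card)) * y ^ (S.card + T.card) * Dr :=
            sumJ n r d S.card T.card ε hstd hdn hε hεn2 hrn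
    · rw [if_neg hTs]
      apply le_of_eq
      apply Finset.sum_eq_zero
      intro J hJ
      rw [if_neg]
      rintro ⟨h1, -⟩
      exact hTs h1
  -- bound the T-sum
  have hTb : ∀ S ∈ A.powerset,
      ∑ T ∈ A.powerset, (if T ⊆ A \ S then
          2 * x ^ (d - (S.card + T.card)) * y ^ (S.card + T.card) * Dr else 0)
      = 2 * Dr * y ^ S.card * (y + x) ^ (d - S.card) := by
    intro S hS
    have hSA : S ⊆ A := Finset.mem_powerset.mp hS
    have hASc : (A \ S).card = d - S.card := by rw [Finset.card_sdiff_of_subset hSA, ← hd]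
    have e1 : ∑ T ∈ A.powerset, (if T ⊆ A \ S then
          2 * x ^ (d - (S.card + T.card)) * y ^ (S.card + T.card) * Dr else 0)
        = ∑ T ∈ (A \ S).powerset,
            (fun t => 2 * x ^ (d - (S.card + t)) * y ^ (S.card + t) * Dr) T.card := by
      rw [← Finset.sum_subset (Finset.powerset_mono.mpr (Finset.sdiff_subset))]
      · apply Finset.sum_congr rfl
        intro T hT
        rw [if_pos (Finset.mem_powerset.mp hT)]
      · intro T hT hT2
        rw [if_neg]
        intro hc
        exact hT2 (Finset.mem_powerset.mpr hc)
    rw [e1, sum_powerset_card (A \ S)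
      (fun t => 2 * x ^ (d - (S.card + t)) * y ^ (S.card + t) * Dr), hASc]
    have e2 : ∀ t ∈ range (d - S.card + 1),
        ((d - S.card).choose t : ℝ) * (2 * x ^ (d - (S.card + t)) * y ^ (S.card + t) * Dr)
        = (2 * Dr * y ^ S.card) * (y ^ t * x ^ (d - S.card - t) * ((d - S.card).choose t : ℝ)) := by
      intro t ht
      rw [← Nat.sub_sub, pow_add]
      ring
    rw [Finset.sum_congr rfl e2, ← Finset.mul_sum, ← add_pow]
  -- put everything together
  have hfinal : (I.card : ℝ) ≤ 2 * (x + 2*y) ^ d * Dr := by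
    calc (I.card : ℝ) ≤ ∑ S ∈ A.powerset, ∑ T ∈ A.powerset, ∑ J ∈ Aᶜ.powerset,
        (if (T ⊆ A \ S ∧ J.card + d ≤ r + S.card ∧ J.card + d ≤ r + T.card)
          then ((d - (S.card + T.card) + J.card).factorial : ℝ) else 0) := hcast
    _ ≤ ∑ S ∈ A.powerset, ∑ T ∈ A.powerset, (if T ⊆ A \ S then
          2 * x ^ (d - (S.card + T.card)) * y ^ (S.card + T.card) * Dr else 0) := by
        apply Finset.sum_le_sum
        intro S hS
        apply Finset.sum_le_sum
        intro T hT
        exact hJb S hS T hT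
    _ = ∑ S ∈ A.powerset, (fun s => 2 * Dr * y ^ s * (y + x) ^ (d - s)) S.card := by
        apply Finset.sum_congr rfl
        intro S hS
        exact hTb S hS
    _ = ∑ s ∈ range (d + 1), (d.choose s : ℝ) * (2 * Dr * y ^ s * (y + x) ^ (d - s)) := by
        rw [sum_powerset_card A (fun s => 2 * Dr * y ^ s * (y + x) ^ (d - s)), hd]
    _ = (2 * Dr) * ∑ s ∈ range (d + 1), y ^ s * (y + x) ^ (d - s) * (d.choose s : ℝ) := by
        rw [Finset.mul_sum]
        apply Finset.sum_congr rfl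
        intro s hs
        ring
    _ = (2 * Dr) * (y + (y + x)) ^ d := by rw [← add_pow]
    _ = 2 * (x + 2*y) ^ d * Dr := by ring_nf
  rw [hpd]
  exact hfinal


set_option maxHeartbeats 2000000 in
/-- Exponential decay of the intersection volume of two balls in the symmetric
group as their centers drift apart. -/
theorem stmt15 (ε : ℝ) (hε0 : 0 < ε) (hε : ε < 0.01) :
    ∃ δ > (0 : ℝ), ∃ n₀ : ℕ, ∀ n : ℕ, n₀ ≤ n → ∀ r : ℕ, 1 ≤ r → (r : ℝ) ≤ (1 - ε) * n →
      ∀ σ τ : Equiv.Perm (Fin n), 6 / ε ≤ (permDist σ τ : ℝ) →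
        ((Finset.univ.filter fun π : Equiv.Perm (Fin n) =>
            permDist π σ ≤ r ∧ permDist π τ ≤ r).card : ℝ) ≤
          2 * Real.exp (-δ * min ((permDist σ τ : ℝ))
                ((permDist σ τ : ℝ) ^ 2 / (r : ℝ))) *
            ((Finset.univ.filter fun π : Equiv.Perm (Fin n) => permDist π σ ≤ r).card : ℝ) := by
  classical
  refine ⟨ε/4, by positivity, ⌈(16:ℝ)/ε^3⌉₊, fun n hn r hr1 hrn σ τ hdist => ?_⟩
  have hε1 : ε < 1 := by linarith
  have hn16 : (16:ℝ)/ε^3 ≤ n := Nat.ceil_le.mp hn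
  have hεn16 : 16/ε^2 ≤ ε * n := by
    have := mul_le_mul_of_nonneg_left hn16 hε0.le
    calc (16:ℝ)/ε^2 = ε * (16/ε^3) := by field_simp
    _ ≤ ε * n := this
  have hεn2 : 2 ≤ ε * n := by
    have h1 : ε^2 ≤ 1 := by nlinarith
    have h2 : (16:ℝ) ≤ 16/ε^2 := by
      rw [le_div_iff₀ (by positivity)]
      nlinarith
    linarith
  have hn0 : (0:ℝ) < n := by nlinarith
  have hεD : 6 ≤ ε * (permDist σ τ : ℝ) := by
    have := mul_le_mul_of_nonneg_left hdist hε0.le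
    calc (6:ℝ) = ε * (6/ε) := by field_simp
    _ ≤ _ := this
  have hD600 : 600 ≤ permDist σ τ := by
    have h1 : (600:ℝ) < 6/ε := by
      rw [lt_div_iff₀ hε0]
      nlinarith
    have : (600:ℝ) ≤ (permDist σ τ : ℝ) := by linarith
    exact_mod_cast this
  by_cases hc : permDist σ τ ≤ 2 * r
  swap
  · -- the two balls are disjoint
    have hempty : (Finset.univ.filter fun π : Equiv.Perm (Fin n) =>
        permDist π σ ≤ r ∧ permDist π τ ≤ r) = ∅ := by
      rw [Finset.eq_empty_iff_forall_notMem]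
      intro π hπ
      rw [Finset.mem_filter] at hπ
      obtain ⟨-, h1, h2⟩ := hπ
      apply hc
      have tri : permDist σ τ ≤ permDist π σ + permDist π τ := by
        unfold permDist
        calc (Finset.univ.filter fun i => σ i ≠ τ i).card
            ≤ ((Finset.univ.filter fun i => π i ≠ σ i)
                ∪ (Finset.univ.filter fun i => π i ≠ τ i)).card := by
              apply Finset.card_le_card
              intro i hi
              rw [Finset.mem_filter] at hi
              rw [Finset.mem_union, Finset.mem_filter, Finset.mem_filter]
              by_contra hcon
              push_neg at hcon
              obtain ⟨ha, hb⟩ := hcon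
              have e1 : π i = σ i := ha (Finset.mem_univ i)
              have e2 : π i = τ i := hb (Finset.mem_univ i)
              exact hi.2 (by rw [← e1, e2])
        _ ≤ _ := Finset.card_union_le _ _
      omega
    rw [hempty, Finset.card_empty]
    norm_num
    positivity
  · -- main case
    have hr2 : 2 ≤ r := by omega
    have hrn' : r ≤ n := by
      have : (r:ℝ) ≤ n := by nlinarith
      exact_mod_cast this
    have key := inter_le_sum n r σ τ ε hε0 hεn2 hrn
    have hball : (n.descFactorial r : ℝ)
        ≤ 3 * ((Finset.univ.filter fun π : Equiv.Perm (Fin n) => permDist π σ ≤ r).card : ℝ) := by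
      have h := ball_lb σ r (by
        have := numD_lb r hr2
        omega)
      exact_mod_cast h
    set D := permDist σ τ with hD
    set x : ℝ := (r:ℝ)/n with hx
    set y : ℝ := (Real.sqrt (ε*n))⁻¹ with hy
    set B : ℝ := ((Finset.univ.filter fun π : Equiv.Perm (Fin n) =>
      permDist π σ ≤ r).card : ℝ) with hB
    have hB0 : 0 ≤ B := by positivity
    have hsq : Real.sqrt (16/ε^2) = 4/ε := by
      rw [show (16:ℝ)/ε^2 = (4/ε)^2 by ring]
      exact Real.sqrt_sq (by positivity)
    have hy4 : y ≤ ε/4 := by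
      have h1 : 4/ε ≤ Real.sqrt (ε*n) := by
        rw [← hsq]
        exact Real.sqrt_le_sqrt hεn16
      have h2 : (0:ℝ) < 4/ε := by positivity
      calc y = (Real.sqrt (ε*n))⁻¹ := hy
      _ ≤ (4/ε)⁻¹ := by
          apply inv_anti₀ h2 h1
      _ = ε/4 := by field_simp
    have hxy : x + 2*y ≤ 1 - ε/2 := by
      have h1 : x ≤ 1 - ε := by
        rw [hx, div_le_iff₀ hn0]
        linarith
      linarith
    have hxy0 : 0 ≤ x + 2*y := by positivity
    have hpow : (x + 2*y)^D ≤ Real.exp (-(ε/2) * D) := by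
      calc (x + 2*y)^D ≤ (1 - ε/2)^D := pow_le_pow_left₀ hxy0 hxy D
      _ ≤ (Real.exp (-(ε/2)))^D := by
          apply pow_le_pow_left₀ (by linarith)
          linarith [Real.add_one_le_exp (-(ε/2))]
      _ = Real.exp (-(ε/2) * D) := by
          rw [← Real.exp_nat_mul]
          ring_nf
    have h3exp : 3 ≤ Real.exp ((ε/4) * D) := by
      have h15 : (1.5:ℝ) ≤ (ε/4) * D := by linarith
      have he : (3:ℝ) ≤ Real.exp 1.5 := by
        have h1 : Real.exp 1.5 = Real.exp 0.75 * Real.exp 0.75 := by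
          rw [← Real.exp_add]; norm_num
        have h2 : (1.75:ℝ) ≤ Real.exp 0.75 := by
          linarith [Real.add_one_le_exp (0.75:ℝ)]
        nlinarith [Real.exp_pos (0.75:ℝ)]
      calc (3:ℝ) ≤ Real.exp 1.5 := he
      _ ≤ _ := Real.exp_le_exp.mpr h15
    have hexpmin : Real.exp (-(ε/2) * D) * 3 ≤ Real.exp (-(ε/4) * min (D:ℝ) ((D:ℝ)^2/(r:ℝ))) := by
      have hmin : min ((D:ℝ)) ((D:ℝ)^2/(r:ℝ)) ≤ (D:ℝ) := min_le_left _ _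
      have e1 : Real.exp (-(ε/4) * (D:ℝ)) ≤ Real.exp (-(ε/4) * min (D:ℝ) ((D:ℝ)^2/(r:ℝ))) := by
        apply Real.exp_le_exp.mpr
        nlinarith
      have e2 : Real.exp (-(ε/2) * D) * Real.exp ((ε/4) * D) = Real.exp (-(ε/4) * D) := by
        rw [← Real.exp_add]; ring_nf
      calc Real.exp (-(ε/2) * D) * 3 ≤ Real.exp (-(ε/2) * D) * Real.exp ((ε/4) * D) := by
            apply mul_le_mul_of_nonneg_left h3exp (Real.exp_pos _).le
      _ = Real.exp (-(ε/4) * D) := e2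
      _ ≤ _ := e1
    calc ((Finset.univ.filter fun π : Equiv.Perm (Fin n) =>
        permDist π σ ≤ r ∧ permDist π τ ≤ r).card : ℝ)
        ≤ 2 * (x + 2*y)^D * (n.descFactorial r : ℝ) := key
    _ ≤ 2 * Real.exp (-(ε/2) * D) * (3 * B) := by
        apply mul_le_mul _ hball (by positivity) (by positivity)
        apply mul_le_mul_of_nonneg_left hpow (by norm_num)
    _ = 2 * (Real.exp (-(ε/2) * D) * 3) * B := by ring
    _ ≤ 2 * Real.exp (-(ε/4) * min (D:ℝ) ((D:ℝ)^2/(r:ℝ))) * B := by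
        apply mul_le_mul_of_nonneg_right _ hB0
        apply mul_le_mul_of_nonneg_left hexpmin (by norm_num)
    _ = 2 * Real.exp (-(ε/4) * min ((permDist σ τ : ℝ)) ((permDist σ τ : ℝ)^2/(r:ℝ))) * B := by
        rw [hD]
end

section
/- Let n ≥ 2, let θ ∈ (0, π/2), and let δ > 0 satisfy 2δ < θ and θ + 2δ < π. Let P₁,…,P_N be a partition of the unit sphere S^{n−1} ⊂ ℝ^n into sets each of Euclidean diameter at most δ, and let v_i ∈ P_i for each i ∈ {1,…,N}. Fix j ∈ {1,…,N}, set x = v_j, and let N[x] = {i ∈ {1,…,N} : ⟨v_i, x⟩ > cos θ}. Then {y ∈ S^{n−1} : ⟨y, x⟩ ≥ cos(θ − 2δ)} ⊆ ⋃_{i ∈ N[x]} P_i ⊆ {y ∈ S^{n−1} : ⟨y, x⟩ ≥ cos(θ + 2δ)}. -/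
open scoped RealInnerProductSpace
open Real

lemma my_arccos_anti {x y : ℝ} (h : x ≤ y) : arccos y ≤ arccos x := by
  unfold Real.arccos
  have := Real.monotone_arcsin h
  linarith

lemma my_proj_norm {E : Type*} [NormedAddCommGroup E] [InnerProductSpace ℝ E]
    {x y : E} (hx : ‖x‖ = 1) (hy : ‖y‖ = 1) :
    ‖x - ⟪x, y⟫ • y‖ = Real.sqrt (1 - ⟪x, y⟫ ^ 2) := by
  have h : ‖x - ⟪x, y⟫ • y‖ ^ 2 = 1 - ⟪x, y⟫ ^ 2 := by
    rw [norm_sub_sq_real, real_inner_smul_right, norm_smul, hx, hy]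
    simp only [Real.norm_eq_abs, mul_one, sq_abs]
    ring
  rw [← h, Real.sqrt_sq (norm_nonneg _)]

/-- Gram inequality for unit vectors. -/
lemma my_key {E : Type*} [NormedAddCommGroup E] [InnerProductSpace ℝ E]
    {x y z : E} (hx : ‖x‖ = 1) (hy : ‖y‖ = 1) (hz : ‖z‖ = 1) :
    ⟪x, y⟫ * ⟪y, z⟫ - Real.sqrt (1 - ⟪x, y⟫ ^ 2) * Real.sqrt (1 - ⟪y, z⟫ ^ 2) ≤ ⟪x, z⟫ := by
  have hyy : ⟪y, y⟫ = 1 := by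
    rw [real_inner_self_eq_norm_sq, hy]; norm_num
  have hu : ⟪x - ⟪x, y⟫ • y, z - ⟪z, y⟫ • y⟫ = ⟪x, z⟫ - ⟪x, y⟫ * ⟪y, z⟫ := by
    simp [inner_sub_left, inner_sub_right, real_inner_smul_left, real_inner_smul_right,
      hyy, hy, real_inner_comm y z]
  have hcs := abs_real_inner_le_norm (x - ⟪x, y⟫ • y) (z - ⟪z, y⟫ • y)
  have hzy : ⟪z, y⟫ = ⟪y, z⟫ := real_inner_comm y z
  rw [hu, my_proj_norm hx hy, my_proj_norm hz hy, hzy] at hcs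
  linarith [abs_le.mp hcs |>.1]

/-- Spherical triangle inequality for unit vectors. -/
lemma my_angle_triangle {E : Type*} [NormedAddCommGroup E] [InnerProductSpace ℝ E]
    {x y z : E} (hx : ‖x‖ = 1) (hy : ‖y‖ = 1) (hz : ‖z‖ = 1) :
    arccos ⟪x, z⟫ ≤ arccos ⟪x, y⟫ + arccos ⟪y, z⟫ := by
  have bound : ∀ u w : E, ‖u‖ = 1 → ‖w‖ = 1 → -1 ≤ ⟪u, w⟫ ∧ ⟪u, w⟫ ≤ (1 : ℝ) := by
    intro u w hu hw
    have := abs_real_inner_le_norm u w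
    rw [hu, hw] at this
    constructor
    · linarith [neg_abs_le ⟪u, w⟫]
    · linarith [le_abs_self ⟪u, w⟫]
  obtain ⟨ha1, ha2⟩ := bound x y hx hy
  obtain ⟨hb1, hb2⟩ := bound y z hy hz
  by_cases hπ : arccos ⟪x, y⟫ + arccos ⟪y, z⟫ ≤ π
  · have hcos : Real.cos (arccos ⟪x, y⟫ + arccos ⟪y, z⟫) ≤ ⟪x, z⟫ := by
      rw [Real.cos_add, Real.cos_arccos ha1 ha2, Real.cos_arccos hb1 hb2,
        Real.sin_arccos, Real.sin_arccos]
      exact my_key hx hy hz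
    calc arccos ⟪x, z⟫ ≤ arccos (Real.cos (arccos ⟪x, y⟫ + arccos ⟪y, z⟫)) :=
          my_arccos_anti hcos
      _ = arccos ⟪x, y⟫ + arccos ⟪y, z⟫ :=
          Real.arccos_cos (add_nonneg (Real.arccos_nonneg _) (Real.arccos_nonneg _)) hπ
  · exact (Real.arccos_le_pi _).trans (le_of_not_ge hπ)

/-- Rounding claim for the discretization of the sphere: the union of the pieces
indexed by the closed neighborhood of x is wedged between two spherical caps. -/
theorem stmt18 (n : ℕ) (hn : 2 ≤ n) (θ δ : ℝ) (hθ0 : 0 < θ) (hθ : θ < Real.pi / 2)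
    (hδ0 : 0 < δ) (hδ1 : 2 * δ < θ) (hδ2 : θ + 2 * δ < Real.pi)
    (N : ℕ) (P : Fin N → Set (EuclideanSpace ℝ (Fin n)))
    (hcover : (⋃ i, P i) = Metric.sphere (0 : EuclideanSpace ℝ (Fin n)) 1)
    (hdisj : Pairwise (Function.onFun Disjoint P))
    (hdiam : ∀ i, Metric.diam (P i) ≤ δ)
    (v : Fin N → EuclideanSpace ℝ (Fin n)) (hv : ∀ i, v i ∈ P i)
    (j : Fin N) :
    {y : EuclideanSpace ℝ (Fin n) |
        y ∈ Metric.sphere (0 : EuclideanSpace ℝ (Fin n)) 1 ∧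
        Real.cos (θ - 2 * δ) ≤ ⟪y, v j⟫} ⊆
      (⋃ i ∈ {i : Fin N | Real.cos θ < ⟪v i, v j⟫}, P i) ∧
    (⋃ i ∈ {i : Fin N | Real.cos θ < ⟪v i, v j⟫}, P i) ⊆
      {y : EuclideanSpace ℝ (Fin n) |
        y ∈ Metric.sphere (0 : EuclideanSpace ℝ (Fin n)) 1 ∧
        Real.cos (θ + 2 * δ) ≤ ⟪y, v j⟫} := by
  have hπ4 : Real.pi < 3.15 := Real.pi_lt_d2
  have hδ1' : δ < 1 := by nlinarith
  have hθπ : θ ≤ Real.pi := by linarith [Real.pi_pos]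
  -- subsets of the sphere
  have hPsub : ∀ i, P i ⊆ Metric.sphere (0 : EuclideanSpace ℝ (Fin n)) 1 := by
    intro i
    rw [← hcover]
    exact Set.subset_iUnion P i
  have hnorm : ∀ {y : EuclideanSpace ℝ (Fin n)},
      y ∈ Metric.sphere (0 : EuclideanSpace ℝ (Fin n)) 1 → ‖y‖ = 1 := by
    intro y hy
    rwa [mem_sphere_zero_iff_norm] at hy
  have hvnorm : ∀ i, ‖v i‖ = 1 := fun i => hnorm (hPsub i (hv i))
  -- distance within a piece
  have hdist : ∀ i, ∀ y ∈ P i, ‖y - v i‖ ≤ δ := by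
    intro i y hy
    rw [← dist_eq_norm]
    exact (Metric.dist_le_diam_of_mem
      (Metric.isBounded_sphere.subset (hPsub i)) hy (hv i)).trans (hdiam i)
  -- sin δ > δ/2
  have hsin : δ / 2 < Real.sin δ := by
    have h3 : δ ^ 3 < δ := by nlinarith [mul_pos hδ0 hδ0, mul_pos (mul_pos hδ0 hδ0) hδ0, sq_nonneg (1 - δ), mul_nonneg (sq_nonneg (1 - δ)) hδ0.le]
    have := Real.sin_gt_sub_cube hδ0
    linarith
  -- chord bound ⇒ strict angle bound
  have chord : ∀ x y : EuclideanSpace ℝ (Fin n), ‖x‖ = 1 → ‖y‖ = 1 →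
      ‖x - y‖ ≤ δ → Real.arccos ⟪x, y⟫ < 2 * δ := by
    intro x y hx hy hd
    have hsq : ‖x - y‖ ^ 2 = 2 - 2 * ⟪x, y⟫ := by
      rw [norm_sub_sq_real, hx, hy]; ring
    have hc2 : Real.cos (2 * δ) = 1 - 2 * Real.sin δ ^ 2 := by
      rw [Real.cos_two_mul']
      nlinarith [Real.sin_sq_add_cos_sq δ]
    have hgt : Real.cos (2 * δ) < ⟪x, y⟫ := by
      have h1 : ‖x - y‖ ^ 2 ≤ δ ^ 2 := by
        nlinarith [norm_nonneg (x - y)]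
      nlinarith
    have hle1 : ⟪x, y⟫ ≤ 1 := by
      have := real_inner_le_norm x y
      rwa [hx, hy, mul_one] at this
    have := Real.strictAntiOn_arccos
      ⟨(Real.neg_one_le_cos _), (Real.cos_le_one _)⟩
      ⟨by linarith [Real.neg_one_le_cos (2*δ)], hle1⟩ hgt
    rwa [Real.arccos_cos (by linarith) (by linarith)] at this
  constructor
  · -- inner cap ⊆ union
    rintro y ⟨hy, hcosy⟩
    obtain ⟨i, hyP⟩ : ∃ i, y ∈ P i := by
      rw [← hcover] at hy
      exact Set.mem_iUnion.mp hy
    have hy1 : ‖y‖ = 1 := hnorm (hPsub i hyP)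
    have A1 : Real.arccos ⟪v i, y⟫ < 2 * δ := by
      apply chord _ _ (hvnorm i) hy1
      have := hdist i y hyP
      rwa [← norm_neg, neg_sub] at this
    have A2 : Real.arccos ⟪y, v j⟫ ≤ θ - 2 * δ := by
      have := my_arccos_anti hcosy
      rwa [Real.arccos_cos (by linarith) (by linarith)] at this
    have tri := my_angle_triangle (hvnorm i) hy1 (hvnorm j)
    have hlt : Real.arccos ⟪v i, v j⟫ < θ := by linarith
    have hIcc : -1 ≤ ⟪v i, v j⟫ ∧ ⟪v i, v j⟫ ≤ (1:ℝ) := by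
      have := abs_real_inner_le_norm (v i) (v j)
      rw [hvnorm i, hvnorm j, mul_one] at this
      exact ⟨by linarith [neg_abs_le ⟪v i, v j⟫], by linarith [le_abs_self ⟪v i, v j⟫]⟩
    have := Real.cos_lt_cos_of_nonneg_of_le_pi (Real.arccos_nonneg _) hθπ hlt
    rw [Real.cos_arccos hIcc.1 hIcc.2] at this
    exact Set.mem_biUnion this hyP
  · -- union ⊆ outer cap
    intro y hy
    obtain ⟨i, hiS, hyP⟩ := Set.mem_iUnion₂.mp hy
    have hysph : y ∈ Metric.sphere (0 : EuclideanSpace ℝ (Fin n)) 1 := hPsub i hyP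
    have hy1 : ‖y‖ = 1 := hnorm hysph
    refine ⟨hysph, ?_⟩
    have A1 : Real.arccos ⟪y, v i⟫ < 2 * δ :=
      chord _ _ hy1 (hvnorm i) (hdist i y hyP)
    have A2 : Real.arccos ⟪v i, v j⟫ ≤ θ := by
      have := my_arccos_anti hiS.le
      rwa [Real.arccos_cos hθ0.le hθπ] at this
    have tri := my_angle_triangle hy1 (hvnorm i) (hvnorm j)
    have hle : Real.arccos ⟪y, v j⟫ ≤ θ + 2 * δ := by linarith
    have hIcc : -1 ≤ ⟪y, v j⟫ ∧ ⟪y, v j⟫ ≤ (1:ℝ) := by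
      have := abs_real_inner_le_norm y (v j)
      rw [hy1, hvnorm j, mul_one] at this
      exact ⟨by linarith [neg_abs_le ⟪y, v j⟫], by linarith [le_abs_self ⟪y, v j⟫]⟩
    have := Real.cos_le_cos_of_nonneg_of_le_pi (Real.arccos_nonneg ⟪y, v j⟫) hδ2.le hle
    rwa [Real.cos_arccos hIcc.1 hIcc.2] at this
end

section
/- Let q ≥ 2 and n ≥ 1 be integers, let r ≥ 0 and 0 ≤ k ≤ n be integers, and let a, b ∈ {0,1,…,q−1}^n with Δ(a,b) = k. Then |B(a,r) ∩ B(b,r)| = Σ_{i,j ≥ 0, i+j ≤ k} [k!/(i!·j!·(k−i−j)!)]·(q−2)^{k−i−j} · Σ_{t=0}^{t_max(i,j)} C(n−k, t)·(q−1)^t, where t_max(i,j) = min(n−k, r−k+i, r−k+j), the inner sum is interpreted as 0 when t_max(i,j) < 0, and 0^0 = 1. -/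
open Finset

section Aux

lemma card_pi_filter {β : Type*} [Fintype β] [DecidableEq β] {q : ℕ}
    (Q : β → Fin q → Prop) [∀ p, DecidablePred (Q p)] :
    (univ.filter fun f : β → Fin q => ∀ p, Q p (f p)).card
      = ∏ p : β, (univ.filter (Q p)).card := by
  rw [← Fintype.card_subtype]
  rw [Fintype.card_congr Equiv.subtypePiEquivPi, Fintype.card_pi]
  simp [Fintype.card_subtype]

lemma card_ne_one {q : ℕ} (x : Fin q) : (univ.filter fun v => v ≠ x).card = q - 1 := by
  rw [Finset.filter_ne', Finset.card_erase_of_mem (mem_univ _)]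
  simp

lemma card_ne_two {q : ℕ} (x y : Fin q) (hxy : x ≠ y) :
    (univ.filter fun v => v ≠ x ∧ v ≠ y).card = q - 2 := by
  have : (univ.filter fun v : Fin q => v ≠ x ∧ v ≠ y) = univ \ {x, y} := by
    ext v; simp [not_or]
  rw [this, Finset.card_sdiff_of_subset (by simp), Finset.card_insert_of_notMem (by simp [hxy])]
  simp

lemma hamming_split {n q : ℕ} (P : Fin n → Prop) [DecidablePred P] (x y : Fin n → Fin q) :
    hammingDist x y = hammingDist (fun p : {p // P p} => x p) (fun p => y p)
      + hammingDist (fun p : {p // ¬ P p} => x p) (fun p => y p) := by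
  simp only [hammingDist]
  rw [← Finset.card_filter_add_card_filter_not (s := univ.filter fun i => x i ≠ y i) (p := P),
    Finset.filter_filter, Finset.filter_filter]
  congr 1
  · rw [← Fintype.card_subtype, ← Fintype.card_subtype]
    exact Fintype.card_congr ((Equiv.subtypeEquivRight (fun p => and_comm)).trans
      (Equiv.subtypeSubtypeEquivSubtypeInter P (fun p => x p ≠ y p)).symm)
  · rw [← Fintype.card_subtype, ← Fintype.card_subtype]
    exact Fintype.card_congr ((Equiv.subtypeEquivRight (fun p => and_comm)).trans
      (Equiv.subtypeSubtypeEquivSubtypeInter (fun p => ¬ P p) (fun p => x p ≠ y p)).symm)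

lemma sphere_card {β : Type*} [Fintype β] [DecidableEq β] {q : ℕ}
    (w : β → Fin q) (t : ℕ) :
    (univ.filter fun c : β → Fin q => hammingDist c w = t).card
      = (Fintype.card β).choose t * (q - 1) ^ t := by
  rw [Finset.card_eq_sum_card_fiberwise
    (f := fun c => univ.filter fun p => c p ≠ w p) (t := univ.powersetCard t)
    (fun c hc => by
      rw [Finset.mem_coe] at hc ⊢
      rw [Finset.mem_powersetCard]
      exact ⟨Finset.subset_univ _, (Finset.mem_filter.mp hc).2⟩)]
  have key : ∀ T ∈ univ.powersetCard t,
      ((univ.filter fun c : β → Fin q => hammingDist c w = t).filter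
        fun c => (univ.filter fun p => c p ≠ w p) = T).card = (q - 1) ^ t := by
    intro T hT
    rw [Finset.mem_powersetCard] at hT
    have h1 : ((univ.filter fun c : β → Fin q => hammingDist c w = t).filter
        fun c => (univ.filter fun p => c p ≠ w p) = T)
        = univ.filter fun c : β → Fin q => ∀ p, (c p ≠ w p ↔ p ∈ T) := by
      ext c
      simp only [Finset.mem_filter, Finset.mem_univ, true_and]
      constructor
      · rintro ⟨_, h⟩ p
        rw [← h]; simp
      · intro h
        have hfil : (univ.filter fun p => c p ≠ w p) = T := by
          ext p; simp [h p]
        exact ⟨by rw [hammingDist, hfil, hT.2], hfil⟩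
    rw [h1, card_pi_filter (fun p v => v ≠ w p ↔ p ∈ T)]
    have : ∀ p : β, (univ.filter fun v : Fin q => (v ≠ w p ↔ p ∈ T)).card
        = if p ∈ T then q - 1 else 1 := by
      intro p
      by_cases hp : p ∈ T
      · simp only [hp, if_true, iff_true]
        exact card_ne_one (w p)
      · simp only [hp, if_false, iff_false, not_not]
        rw [Finset.filter_eq']
        simp
    rw [Finset.prod_congr rfl (fun p _ => this p), Finset.prod_ite_mem, Finset.univ_inter,
      Finset.prod_const, hT.2]
  rw [Finset.sum_congr rfl key, Finset.sum_const, Finset.card_powersetCard, Finset.card_univ,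
    smul_eq_mul]

lemma pair_card {β : Type*} [Fintype β] [DecidableEq β] {q : ℕ}
    (a b : β → Fin q) (hne : ∀ p, a p ≠ b p) (i j : ℕ) :
    (univ.filter fun s : β → Fin q =>
        (univ.filter fun p => s p = a p).card = i ∧ (univ.filter fun p => s p = b p).card = j).card
      = (Fintype.card β).choose i * (Fintype.card β - i).choose j
          * (q - 2) ^ (Fintype.card β - i - j) := by
  classical
  rw [Finset.card_eq_sum_card_fiberwise
    (f := fun s => (⟨univ.filter fun p => s p = a p, univ.filter fun p => s p = b p⟩ :
        Σ _ : Finset β, Finset β))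
    (t := (univ.powersetCard i).sigma fun A => Aᶜ.powersetCard j)
    (fun s hs => by
      rw [Finset.mem_coe] at hs ⊢
      rw [Finset.mem_filter] at hs
      rw [Finset.mem_sigma, Finset.mem_powersetCard, Finset.mem_powersetCard]
      refine ⟨⟨Finset.subset_univ _, hs.2.1⟩, ?_, hs.2.2⟩
      intro p hp
      rw [Finset.mem_filter] at hp
      rw [Finset.mem_compl, Finset.mem_filter]
      rintro ⟨-, h⟩
      exact hne p (h ▸ hp.2 ▸ rfl))]
  have key : ∀ AB ∈ (univ.powersetCard i).sigma fun A => Aᶜ.powersetCard j,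
      ((univ.filter fun s : β → Fin q =>
        (univ.filter fun p => s p = a p).card = i ∧ (univ.filter fun p => s p = b p).card = j).filter
        fun s => (⟨univ.filter fun p => s p = a p, univ.filter fun p => s p = b p⟩ :
          Σ _ : Finset β, Finset β) = AB).card = (q - 2) ^ (Fintype.card β - i - j) := by
    rintro ⟨A, B⟩ hAB
    rw [Finset.mem_sigma, Finset.mem_powersetCard, Finset.mem_powersetCard] at hAB
    obtain ⟨⟨-, hAi⟩, hBA, hBj⟩ := hAB
    have hdisj : ∀ p, p ∈ B → p ∉ A := fun p hp => Finset.mem_compl.mp (hBA hp)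
    have h1 : ((univ.filter fun s : β → Fin q =>
        (univ.filter fun p => s p = a p).card = i ∧ (univ.filter fun p => s p = b p).card = j).filter
        fun s => (⟨univ.filter fun p => s p = a p, univ.filter fun p => s p = b p⟩ :
          Σ _ : Finset β, Finset β) = ⟨A, B⟩)
        = univ.filter fun s : β → Fin q =>
            ∀ p, ((s p = a p ↔ p ∈ A) ∧ (s p = b p ↔ p ∈ B)) := by
      ext s
      simp only [Finset.mem_filter, Finset.mem_univ, true_and, Sigma.mk.inj_iff, heq_eq_eq]
      constructor
      · rintro ⟨-, hA, hB⟩ p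
        rw [← hA, ← hB]; simp
      · intro h
        have hA : (univ.filter fun p => s p = a p) = A := by ext p; simp [(h p).1]
        have hB : (univ.filter fun p => s p = b p) = B := by ext p; simp [(h p).2]
        exact ⟨⟨by rw [hA, hAi], by rw [hB, hBj]⟩, hA, hB⟩
    rw [h1, card_pi_filter (fun p v => (v = a p ↔ p ∈ A) ∧ (v = b p ↔ p ∈ B))]
    have hcard : ∀ p : β,
        (univ.filter fun v : Fin q => (v = a p ↔ p ∈ A) ∧ (v = b p ↔ p ∈ B)).card
        = if p ∈ A ∪ B then 1 else q - 2 := by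
      intro p
      by_cases hpA : p ∈ A
      · have hpB : p ∉ B := fun h => hdisj p h hpA
        have : (univ.filter fun v : Fin q => (v = a p ↔ p ∈ A) ∧ (v = b p ↔ p ∈ B)) = {a p} := by
          ext v
          simp only [Finset.mem_filter, Finset.mem_univ, true_and, hpA, hpB, iff_true,
            iff_false, Finset.mem_singleton]
          exact ⟨fun h => h.1, fun h => ⟨h, by rw [h]; exact hne p⟩⟩
        rw [this]; simp [hpA]
      · by_cases hpB : p ∈ B
        · have : (univ.filter fun v : Fin q => (v = a p ↔ p ∈ A) ∧ (v = b p ↔ p ∈ B)) = {b p} := by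
            ext v
            simp only [Finset.mem_filter, Finset.mem_univ, true_and, hpA, hpB, iff_true,
              iff_false, Finset.mem_singleton]
            exact ⟨fun h => h.2, fun h => ⟨by rw [h]; exact fun hh => hne p hh.symm, h⟩⟩
          rw [this]; simp [hpB]
        · have hiff : (univ.filter fun v : Fin q => (v = a p ↔ p ∈ A) ∧ (v = b p ↔ p ∈ B))
              = univ.filter fun v : Fin q => v ≠ a p ∧ v ≠ b p := by
            ext v; simp [hpA, hpB]
          rw [hiff, card_ne_two _ _ (hne p)]
          simp [hpA, hpB]
    rw [Finset.prod_congr rfl fun p _ => hcard p]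
    have : ∀ p : β, (if p ∈ A ∪ B then 1 else q - 2)
        = (if p ∈ (A ∪ B)ᶜ then q - 2 else 1) := by
      intro p; by_cases h : p ∈ A ∪ B
      · rw [if_pos h, if_neg (by simp only [Finset.mem_compl]; exact fun hc => hc h)]
      · rw [if_neg h, if_pos (Finset.mem_compl.mpr h)]
    rw [Finset.prod_congr rfl fun p _ => this p, Finset.prod_ite_mem, Finset.univ_inter,
      Finset.prod_const, Finset.card_compl,
      Finset.card_union_of_disjoint (Finset.disjoint_left.mpr fun p hp hq => hdisj p hq hp),
      hAi, hBj]
    congr 1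
    omega
  rw [Finset.sum_congr rfl key, Finset.sum_const, Finset.card_sigma, smul_eq_mul]
  congr 1
  have : ∀ A ∈ (univ : Finset β).powersetCard i, (Aᶜ.powersetCard j).card
      = (Fintype.card β - i).choose j := by
    intro A hA
    rw [Finset.mem_powersetCard] at hA
    rw [Finset.card_powersetCard, Finset.card_compl, hA.2]
  rw [Finset.sum_congr rfl this, Finset.sum_const, Finset.card_powersetCard, Finset.card_univ,
    smul_eq_mul]

lemma multinomial_eq' (k i j : ℕ) (h : i + j ≤ k) :
    k.factorial / (i.factorial * j.factorial * (k - i - j).factorial)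
      = k.choose i * (k - i).choose j := by
  have hik : i ≤ k := le_trans (Nat.le_add_right i j) h
  have hjk : j ≤ k - i := by omega
  have h1 := Nat.choose_mul_factorial_mul_factorial hik
  have h2 := Nat.choose_mul_factorial_mul_factorial hjk
  have hd : k - i - j = k - i - j := rfl
  rw [Nat.div_eq_of_eq_mul_left (by positivity)]
  rw [← h1, ← h2]
  ring

end Aux

/-- Exact formula for the volume of the intersection of two q-ary Hamming balls of
radius r whose centers are at Hamming distance k. -/
theorem stmt19 (q n : ℕ) (hq : 2 ≤ q) (hn : 1 ≤ n) (r k : ℕ) (hkn : k ≤ n)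
    (a b : Fin n → Fin q) (hab : hammingDist a b = k) :
    (Finset.univ.filter fun x : Fin n → Fin q =>
        hammingDist x a ≤ r ∧ hammingDist x b ≤ r).card =
      ∑ i ∈ Finset.range (k + 1), ∑ j ∈ Finset.range (k + 1 - i),
        (k.factorial / (i.factorial * j.factorial * (k - i - j).factorial)) *
          (q - 2) ^ (k - i - j) *
          (if min ((n : ℤ) - k) (min ((r : ℤ) - k + i) ((r : ℤ) - k + j)) < 0 then 0
           else ∑ t ∈ Finset.range
              ((min ((n : ℤ) - k) (min ((r : ℤ) - k + i) ((r : ℤ) - k + j))).toNat + 1),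
             ((n - k).choose t) * (q - 1) ^ t) := by
  classical
  set P : Fin n → Prop := fun p => a p ≠ b p with hP
  let α := {p // P p}
  let γ := {p // ¬ P p}
  have hcα : Fintype.card α = k := by
    rw [Fintype.card_subtype, ← hab, hammingDist]
  have hcγ : Fintype.card γ = n - k := by
    rw [Fintype.card_subtype_compl, hcα, Fintype.card_fin]
  set a' : α → Fin q := fun p => a p with ha'
  set b' : α → Fin q := fun p => b p with hb'
  set w : γ → Fin q := fun p => a p with hw
  have hne : ∀ p : α, a' p ≠ b' p := fun p => p.2
  have hbw : (fun p : γ => b ↑p) = w := funext fun p => (not_ne_iff.mp p.2).symm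
  set e := Equiv.piEquivPiSubtypeProd P (fun _ => Fin q) with he
  -- Step 1: transport to product
  have step1 : (Finset.univ.filter fun x : Fin n → Fin q =>
        hammingDist x a ≤ r ∧ hammingDist x b ≤ r).card
      = (Finset.univ.filter fun y : (α → Fin q) × (γ → Fin q) =>
          hammingDist y.1 a' + hammingDist y.2 w ≤ r
          ∧ hammingDist y.1 b' + hammingDist y.2 w ≤ r).card := by
    rw [← Fintype.card_subtype, ← Fintype.card_subtype]
    refine Fintype.card_congr (e.subtypeEquiv fun x => ?_)
    have hx1 : (fun p : α => x ↑p) = (e x).1 := rfl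
    have hx2 : (fun p : γ => x ↑p) = (e x).2 := rfl
    rw [hamming_split P x a, hamming_split P x b, hx1, hx2, hbw]
  rw [step1]
  -- helper: distance vs agreement count on the α part
  have hda : ∀ s : α → Fin q,
      (univ.filter fun p => s p = a' p).card + hammingDist s a' = k := by
    intro s
    rw [hammingDist]
    rw [show (univ.filter fun p : α => s p ≠ a' p)
        = univ.filter (fun p : α => ¬ s p = a' p) from rfl]
    rw [Finset.card_filter_add_card_filter_not, Finset.card_univ, hcα]
  have hdb : ∀ s : α → Fin q,
      (univ.filter fun p => s p = b' p).card + hammingDist s b' = k := by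
    intro s
    rw [hammingDist]
    rw [show (univ.filter fun p : α => s p ≠ b' p)
        = univ.filter (fun p : α => ¬ s p = b' p) from rfl]
    rw [Finset.card_filter_add_card_filter_not, Finset.card_univ, hcα]
  have hsum_le : ∀ s : α → Fin q,
      (univ.filter fun p => s p = a' p).card + (univ.filter fun p => s p = b' p).card ≤ k := by
    intro s
    rw [← hcα, ← Finset.card_univ]
    rw [← Finset.card_union_of_disjoint (Finset.disjoint_left.mpr ?_)]
    · exact Finset.card_le_card (Finset.subset_univ _)
    · intro p hp1 hp2
      rw [Finset.mem_filter] at hp1 hp2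
      exact hne p (hp1.2 ▸ hp2.2 ▸ rfl)
  -- Step 2: fiberwise over (i, j)
  rw [Finset.card_eq_sum_card_fiberwise
    (f := fun y : (α → Fin q) × (γ → Fin q) =>
      (⟨(univ.filter fun p => y.1 p = a' p).card, (univ.filter fun p => y.1 p = b' p).card⟩ :
        Σ _ : ℕ, ℕ))
    (t := (Finset.range (k + 1)).sigma fun i => Finset.range (k + 1 - i))
    (fun y _ => by
      rw [Finset.mem_coe]
      rw [Finset.mem_sigma, Finset.mem_range, Finset.mem_range]
      have := hsum_le y.1
      dsimp only
      omega)]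
  rw [Finset.sum_sigma]
  refine Finset.sum_congr rfl fun i hi => Finset.sum_congr rfl fun j hj => ?_
  rw [Finset.mem_range] at hi hj
  have hij : i + j ≤ k := by omega
  -- the fiber splits as a product
  have hfib : ((Finset.univ.filter fun y : (α → Fin q) × (γ → Fin q) =>
          hammingDist y.1 a' + hammingDist y.2 w ≤ r
          ∧ hammingDist y.1 b' + hammingDist y.2 w ≤ r).filter
        fun y => (⟨(univ.filter fun p => y.1 p = a' p).card,
            (univ.filter fun p => y.1 p = b' p).card⟩ : Σ _ : ℕ, ℕ) = ⟨i, j⟩)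
      = (univ.filter fun s : α → Fin q =>
          (univ.filter fun p => s p = a' p).card = i
            ∧ (univ.filter fun p => s p = b' p).card = j) ×ˢ
        (univ.filter fun c : γ → Fin q =>
          k - i + hammingDist c w ≤ r ∧ k - j + hammingDist c w ≤ r) := by
    ext ⟨s, c⟩
    simp only [Finset.mem_filter, Finset.mem_product, Finset.mem_univ, true_and,
      Sigma.mk.inj_iff, heq_eq_eq]
    constructor
    · rintro ⟨⟨h1, h2⟩, hI, hJ⟩
      have e1 := hda s; have e2 := hdb s
      refine ⟨⟨hI, hJ⟩, ?_, ?_⟩ <;> omega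
    · rintro ⟨⟨hI, hJ⟩, h1, h2⟩
      have e1 := hda s; have e2 := hdb s
      refine ⟨⟨?_, ?_⟩, hI, hJ⟩ <;> omega
  rw [hfib, Finset.card_product, pair_card a' b' hne i j, hcα]
  congr 1
  · exact (multinomial_eq' k i j hij).symm ▸ rfl
  -- Step 3: count the γ part
  by_cases hneg : min ((n : ℤ) - k) (min ((r : ℤ) - k + i) ((r : ℤ) - k + j)) < 0
  · rw [if_pos hneg]
    rw [Finset.card_eq_zero, Finset.filter_eq_empty_iff]
    intro c _
    push_neg
    intro h1
    omega
  · rw [if_neg hneg]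
    set m := (min ((n : ℤ) - k) (min ((r : ℤ) - k + i) ((r : ℤ) - k + j))).toNat with hm
    have hmz : ((m : ℤ)) = min ((n : ℤ) - k) (min ((r : ℤ) - k + i) ((r : ℤ) - k + j)) := by
      rw [hm]; exact Int.toNat_of_nonneg (not_lt.mp hneg)
    have hdc_le : ∀ c : γ → Fin q, hammingDist c w ≤ n - k := by
      intro c
      calc hammingDist c w ≤ Fintype.card γ := hammingDist_le_card_fintype
      _ = n - k := hcγ
    rw [Finset.card_eq_sum_card_fiberwise
      (f := fun c : γ → Fin q => hammingDist c w)
      (t := Finset.range (m + 1))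
      (fun c hc => by
        rw [Finset.mem_coe] at hc ⊢
        rw [Finset.mem_filter] at hc
        rw [Finset.mem_range]
        have := hdc_le c
        dsimp only
        omega)]
    refine Finset.sum_congr rfl fun t ht => ?_
    rw [Finset.mem_range] at ht
    have heq : ((univ.filter fun c : γ → Fin q =>
          k - i + hammingDist c w ≤ r ∧ k - j + hammingDist c w ≤ r).filter
        fun c => hammingDist c w = t)
        = univ.filter fun c : γ → Fin q => hammingDist c w = t := by
      ext c
      simp only [Finset.mem_filter, Finset.mem_univ, true_and]
      constructor
      · rintro ⟨-, h⟩; exact h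
      · intro h
        refine ⟨⟨?_, ?_⟩, h⟩ <;> rw [h] <;> omega
    rw [heq, sphere_card, hcγ]
end
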